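/- arXiv:2107.13298 — 7 statements merged into one kernel-verified Lean document; each statement's English description precedes it below -/
import Mathlib

section
/- Let X ⊆ ℝ^n be nonempty and f : ℝ^n → ℝ attain its minimum on X. Then the convex envelope φ of f on X satisfies, for every x ∈ convexHull X: φ(x) = inf { Σ_{l=1}^{n+1} α_l f(x^l) | α ∈ ℝ^{n+1}_{≥0}, Σ α_l = 1, x^l ∈ X, Σ α_l x^l = x }. -/
open Finset

/-- Reindex a finset-weighted sum by `Fin m`, `m ≥ card`. -/
lemma aux_exists_fin {E : Type} {m : ℕ} (t : Finset E) (hne : t.Nonempty)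
    (hcard : t.card ≤ m) (w : E → ℝ) (hw : ∀ p ∈ t, 0 ≤ w p) :
    ∃ (β : Fin m → ℝ) (q : Fin m → E), (∀ l, 0 ≤ β l) ∧ (∀ l, q l ∈ t) ∧
      (∀ (M : Type) [AddCommMonoid M] [Module ℝ M] (G : E → M),
        ∑ l, β l • G (q l) = ∑ p ∈ t, w p • G p) := by
  classical
  let e : {x // x ∈ t} ≃ Fin t.card := Fintype.equivFinOfCardEq (Fintype.card_coe t)
  refine ⟨fun l => if h : (l : ℕ) < t.card then w ((e.symm ⟨l, h⟩ : {x // x ∈ t}) : E) else 0,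
    fun l => if h : (l : ℕ) < t.card then ((e.symm ⟨l, h⟩ : {x // x ∈ t}) : E) else hne.choose,
    ?_, ?_, ?_⟩
  · intro l; dsimp only; split
    · exact hw _ (Subtype.coe_prop _)
    · exact le_refl 0
  · intro l; dsimp only; split
    · exact Subtype.coe_prop _
    · exact hne.choose_spec
  · intro M _ _ G
    set D : ℕ → M := fun i =>
      if h : i < t.card then w ((e.symm ⟨i, h⟩ : {x // x ∈ t}) : E) •
        G ((e.symm ⟨i, h⟩ : {x // x ∈ t}) : E) else 0 with hD
    have h1 : ∑ l : Fin m, (if h : (l : ℕ) < t.card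
        then w ((e.symm ⟨l, h⟩ : {x // x ∈ t}) : E) else 0) •
        G (if h : (l : ℕ) < t.card then ((e.symm ⟨l, h⟩ : {x // x ∈ t}) : E)
          else hne.choose) = ∑ l : Fin m, D (l : ℕ) := by
      refine Finset.sum_congr rfl fun l _ => ?_
      by_cases h : (l : ℕ) < t.card <;> simp [hD, h]
    rw [h1, Fin.sum_univ_eq_sum_range D m,
      ← Finset.sum_subset (Finset.range_subset_range.2 hcard)
        (fun i _ hi => dif_neg (by simpa using hi)),
      ← Fin.sum_univ_eq_sum_range D t.card]
    have h2 : ∑ l : Fin t.card, D (l : ℕ) =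
        ∑ l : Fin t.card, w ((e.symm l : {x // x ∈ t}) : E) • G ((e.symm l : {x // x ∈ t}) : E) :=
      Finset.sum_congr rfl fun l _ => by simp [hD, l.isLt]
    rw [h2, Equiv.sum_comp e.symm (fun p : {x // x ∈ t} => w (p : E) • G (p : E)),
      Finset.sum_coe_sort t (fun p => w p • G p)]

/-- Collect an indexed combination into point-indexed weights. -/
lemma aux_fiber_sum {ι E : Type} [DecidableEq E] (s : Finset ι) (α : ι → ℝ) (p : ι → E)
    (M : Type) [AddCommMonoid M] [Module ℝ M] (G : E → M) :
    ∑ q ∈ s.image p, (∑ l ∈ s.filter (fun l => p l = q), α l) • G q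
      = ∑ i ∈ s, α i • G (p i) := by
  rw [← Finset.sum_fiberwise_of_maps_to (fun i hi => Finset.mem_image_of_mem p hi)
    (fun i => α i • G (p i))]
  refine Finset.sum_congr rfl fun q _ => ?_
  rw [Finset.sum_smul]
  refine Finset.sum_congr rfl fun i hi => ?_
  rw [(Finset.mem_filter.1 hi).2]

open Finset

/-- LP/extreme-point reduction: a finite convex combination can be reduced to one supported
on at most `n+1` points without increasing the `f`-value. -/
lemma aux_reduce {n : ℕ} (f : (Fin n → ℝ) → ℝ) (t : Finset (Fin n → ℝ))
    (w : (Fin n → ℝ) → ℝ) (hw : ∀ p ∈ t, 0 ≤ w p) :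
    ∃ (t' : Finset (Fin n → ℝ)) (w' : (Fin n → ℝ) → ℝ), t' ⊆ t ∧ t'.card ≤ n + 1 ∧
      (∀ p ∈ t', 0 ≤ w' p) ∧ (∑ p ∈ t', w' p = ∑ p ∈ t, w p) ∧
      (∑ p ∈ t', w' p • p = ∑ p ∈ t, w p • p) ∧
      (∑ p ∈ t', w' p * f p ≤ ∑ p ∈ t, w p * f p) := by
  classical
  induction t using Finset.strongInductionOn generalizing w with
  | _ t ih =>
  by_cases hcard : t.card ≤ n + 1
  · exact ⟨t, w, Finset.Subset.refl t, hcard, hw, rfl, rfl, le_refl _⟩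
  -- Since card > n+1, the points of t are affinely dependent.
  have hdep : ¬AffineIndependent ℝ ((↑) : t → (Fin n → ℝ)) := by
    intro h
    have h1 := h.card_le_finrank_succ
    have h2 : Module.finrank ℝ (vectorSpan ℝ (Set.range ((↑) : t → (Fin n → ℝ)))) ≤ n := by
      have := Submodule.finrank_le (vectorSpan ℝ (Set.range ((↑) : t → (Fin n → ℝ))))
      simpa [Module.finrank_fin_fun] using this
    rw [Fintype.card_coe] at h1
    omega
  obtain ⟨g₀, hg₀vec, hg₀sum, hg₀ne⟩ :=
    exists_nontrivial_relation_sum_zero_of_not_affine_ind hdep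
  -- normalize the sign so that ∑ g e * f e ≥ 0
  obtain ⟨g, hgvec, hgsum, hgne, hgf⟩ :
      ∃ g : (Fin n → ℝ) → ℝ, (∑ e ∈ t, g e • e = 0) ∧ (∑ e ∈ t, g e = 0) ∧
        (∃ x ∈ t, g x ≠ 0) ∧ 0 ≤ ∑ e ∈ t, g e * f e := by
    rcases le_or_gt 0 (∑ e ∈ t, g₀ e * f e) with h | h
    · exact ⟨g₀, hg₀vec, hg₀sum, hg₀ne, h⟩
    · refine ⟨fun e => -g₀ e, ?_, ?_, ?_, ?_⟩
      · simp [neg_smul, Finset.sum_neg_distrib, hg₀vec]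
      · simp [Finset.sum_neg_distrib, hg₀sum]
      · obtain ⟨x, hx, hgx⟩ := hg₀ne; exact ⟨x, hx, by simpa using hgx⟩
      · have : ∑ e ∈ t, -g₀ e * f e = -∑ e ∈ t, g₀ e * f e := by
          simp [neg_mul, Finset.sum_neg_distrib]
        rw [this]; linarith
  -- there is a positive coefficient
  have hpos : ∃ x ∈ t, 0 < g x := exists_pos_of_sum_zero_of_exists_nonzero g hgsum hgne
  set s : Finset (Fin n → ℝ) := t.filter (fun z => 0 < g z) with hs
  have hsne : s.Nonempty := by
    obtain ⟨x, hx, hgx⟩ := hpos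
    exact ⟨x, Finset.mem_filter.2 ⟨hx, hgx⟩⟩
  obtain ⟨i₀, hi₀s, hi₀min⟩ := s.exists_min_image (fun z => w z / g z) hsne
  have hgi₀ : 0 < g i₀ := (Finset.mem_filter.1 hi₀s).2
  have hi₀t : i₀ ∈ t := (Finset.mem_filter.1 hi₀s).1
  set τ : ℝ := w i₀ / g i₀ with hτ
  have hτ0 : 0 ≤ τ := div_nonneg (hw _ hi₀t) hgi₀.le
  set w'' : (Fin n → ℝ) → ℝ := fun p => w p - τ * g p with hw''
  have hw''nn : ∀ p ∈ t, 0 ≤ w'' p := by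
    intro p hp
    rcases le_or_gt (g p) 0 with h | h
    · have : τ * g p ≤ 0 := mul_nonpos_of_nonneg_of_nonpos hτ0 h
      have := hw p hp
      simp only [hw'']; linarith
    · have hps : p ∈ s := Finset.mem_filter.2 ⟨hp, h⟩
      have hmin := hi₀min p hps
      have : τ * g p ≤ w p := by
        rw [hτ]
        calc w i₀ / g i₀ * g p ≤ w p / g p * g p :=
          mul_le_mul_of_nonneg_right hmin h.le
        _ = w p := div_mul_cancel₀ _ h.ne'
      simp only [hw'']; linarith
  have hw''i₀ : w'' i₀ = 0 := by
    simp only [hw'', hτ]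
    field_simp
    ring
  -- sums over t with w'' agree with those with w
  have hsum'' : ∑ p ∈ t, w'' p = ∑ p ∈ t, w p := by
    simp [hw'', Finset.sum_sub_distrib, ← Finset.mul_sum, hgsum]
  have hvec'' : ∑ p ∈ t, w'' p • p = ∑ p ∈ t, w p • p := by
    simp only [hw'', sub_smul, Finset.sum_sub_distrib, mul_smul, ← Finset.smul_sum, hgvec,
      smul_zero, sub_zero]
  have hval'' : ∑ p ∈ t, w'' p * f p ≤ ∑ p ∈ t, w p * f p := by
    have : ∑ p ∈ t, w'' p * f p = ∑ p ∈ t, w p * f p - τ * ∑ p ∈ t, g p * f p := by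
      simp [hw'', sub_mul, Finset.sum_sub_distrib, Finset.mul_sum, mul_assoc]
    rw [this]
    nlinarith
  -- drop i₀ and recurse
  have herase : ∀ F : (Fin n → ℝ) → ℝ, ∑ p ∈ t.erase i₀, w'' p * F p = ∑ p ∈ t, w'' p * F p := by
    intro F
    conv_rhs => rw [← Finset.insert_erase hi₀t]
    rw [Finset.sum_insert (Finset.notMem_erase i₀ t), hw''i₀, zero_mul, zero_add]
  have herasev : ∑ p ∈ t.erase i₀, w'' p • p = ∑ p ∈ t, w'' p • p := by
    conv_rhs => rw [← Finset.insert_erase hi₀t]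
    rw [Finset.sum_insert (Finset.notMem_erase i₀ t), hw''i₀, zero_smul, zero_add]
  have herase1 : ∑ p ∈ t.erase i₀, w'' p = ∑ p ∈ t, w'' p := by
    conv_rhs => rw [← Finset.insert_erase hi₀t]
    rw [Finset.sum_insert (Finset.notMem_erase i₀ t), hw''i₀, zero_add]
  obtain ⟨t', w', h1, h2, h3, h4, h5, h6⟩ :=
    ih (t.erase i₀) (Finset.erase_ssubset hi₀t) w'' (fun p hp => hw''nn p (Finset.mem_of_mem_erase hp))
  refine ⟨t', w', h1.trans (Finset.erase_subset _ _), h2, h3, ?_, ?_, ?_⟩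
  · rw [h4, herase1, hsum'']
  · rw [h5, herasev, hvec'']
  · calc ∑ p ∈ t', w' p * f p ≤ ∑ p ∈ t.erase i₀, w'' p * f p := h6
      _ = ∑ p ∈ t, w'' p * f p := herase f
      _ ≤ ∑ p ∈ t, w p * f p := hval''

/-- Pipeline: any finite convex combination from `X` representing `x` dominates some
`(n+1)`-point combination from `X` representing `x`. -/
lemma aux_pipeline {n : ℕ} (X : Set (Fin n → ℝ)) (f : (Fin n → ℝ) → ℝ) {ι : Type}
    (s : Finset ι) (α : ι → ℝ) (p : ι → Fin n → ℝ)
    (hα : ∀ i ∈ s, 0 ≤ α i) (hsum : ∑ i ∈ s, α i = 1) (hpX : ∀ i ∈ s, p i ∈ X)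
    (x : Fin n → ℝ) (hx : ∑ i ∈ s, α i • p i = x) :
    ∃ (β : Fin (n + 1) → ℝ) (q : Fin (n + 1) → (Fin n → ℝ)),
      (∀ l, 0 ≤ β l) ∧ (∑ l, β l = 1) ∧ (∀ l, q l ∈ X) ∧ (∑ l, β l • q l = x) ∧
      ∑ l, β l * f (q l) ≤ ∑ i ∈ s, α i * f (p i) := by
  classical
  set t : Finset (Fin n → ℝ) := s.image p with ht
  set w : (Fin n → ℝ) → ℝ := fun y => ∑ l ∈ s.filter (fun l => p l = y), α l with hwdef
  have hW : ∀ (M : Type) [AddCommMonoid M] [Module ℝ M] (G : (Fin n → ℝ) → M),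
      ∑ y ∈ t, w y • G y = ∑ i ∈ s, α i • G (p i) := by
    intro M _ _ G
    exact aux_fiber_sum s α p M G
  have hwnn : ∀ y ∈ t, 0 ≤ w y :=
    fun y _ => Finset.sum_nonneg fun l hl => hα l (Finset.mem_filter.1 hl).1
  obtain ⟨t', w', hsub, hcard, hw'nn, hs1, hs2, hs3⟩ := aux_reduce f t w hwnn
  have htone : ∑ y ∈ t, w y = 1 := by
    have := hW ℝ (fun _ => (1 : ℝ))
    simpa [smul_eq_mul, hsum] using this
  have ht'one : ∑ y ∈ t', w' y = 1 := by rw [hs1, htone]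
  have ht'vec : ∑ y ∈ t', w' y • y = x := by
    rw [hs2]
    have := hW (Fin n → ℝ) id
    simpa [hx] using this
  have ht'val : ∑ y ∈ t', w' y * f y ≤ ∑ i ∈ s, α i * f (p i) := by
    refine hs3.trans ?_
    have := hW ℝ f
    simp only [smul_eq_mul] at this
    rw [this]
  have ht'ne : t'.Nonempty := by
    rcases Finset.eq_empty_or_nonempty t' with h | h
    · rw [h] at ht'one; simp at ht'one
    · exact h
  obtain ⟨β, q, hβnn, hqt, htrans⟩ := aux_exists_fin t' ht'ne hcard w' hw'nn
  refine ⟨β, q, hβnn, ?_, ?_, ?_, ?_⟩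
  · have := htrans ℝ (fun _ => (1 : ℝ))
    simpa [smul_eq_mul, ht'one] using this
  · intro l
    obtain ⟨i, hi, hpi⟩ := Finset.mem_image.1 (hsub (hqt l))
    exact hpi ▸ hpX i hi
  · have := htrans (Fin n → ℝ) id
    simpa [ht'vec] using this
  · have := htrans ℝ f
    simp only [smul_eq_mul] at this
    rw [this]
    exact ht'val

theorem stmt2' {n : ℕ} (X : Set (Fin n → ℝ)) (f : (Fin n → ℝ) → ℝ)
    (hX : X.Nonempty)
    (hmin : ∃ x₀ ∈ X, ∀ y ∈ X, f x₀ ≤ f y) :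
    ∀ x ∈ convexHull ℝ X,
      sSup {v : ℝ | ∃ g : (Fin n → ℝ) → ℝ,
        ConvexOn ℝ (convexHull ℝ X) g ∧ (∀ y ∈ X, g y ≤ f y) ∧ v = g x} =
        sInf {v : ℝ | ∃ (α : Fin (n + 1) → ℝ) (p : Fin (n + 1) → (Fin n → ℝ)),
          (∀ l, 0 ≤ α l) ∧ (∑ l, α l = 1) ∧ (∀ l, p l ∈ X) ∧
          (∑ l, α l • p l = x) ∧ v = ∑ l, α l * f (p l)} := by
  classical
  obtain ⟨x₀, hx₀X, hx₀min⟩ := hmin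
  set S : (Fin n → ℝ) → Set ℝ := fun y =>
    {v : ℝ | ∃ (α : Fin (n + 1) → ℝ) (p : Fin (n + 1) → (Fin n → ℝ)),
      (∀ l, 0 ≤ α l) ∧ (∑ l, α l = 1) ∧ (∀ l, p l ∈ X) ∧
      (∑ l, α l • p l = y) ∧ v = ∑ l, α l * f (p l)} with hSdef
  set G : (Fin n → ℝ) → Set ℝ := fun y => {v : ℝ | ∃ g : (Fin n → ℝ) → ℝ,
    ConvexOn ℝ (convexHull ℝ X) g ∧ (∀ y' ∈ X, g y' ≤ f y') ∧ v = g y} with hGdef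
  -- uniform lower bound
  have hbdd : ∀ y, ∀ v ∈ S y, f x₀ ≤ v := by
    rintro y v ⟨α, p, hα, hαs, hpX, -, rfl⟩
    calc f x₀ = (∑ l, α l) * f x₀ := by rw [hαs, one_mul]
      _ = ∑ l, α l * f x₀ := Finset.sum_mul ..
      _ ≤ ∑ l, α l * f (p l) :=
        Finset.sum_le_sum fun l _ =>
          mul_le_mul_of_nonneg_left (hx₀min _ (hpX l)) (hα l)
  have hSbdd : ∀ y, BddBelow (S y) := fun y => ⟨f x₀, fun v hv => hbdd y v hv⟩
  -- S y nonempty for y in the hull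
  have hSne : ∀ y ∈ convexHull ℝ X, (S y).Nonempty := by
    intro y hy
    rw [_root_.convexHull_eq] at hy
    obtain ⟨ι, tf, wι, z, h0, h1, hz, hcm⟩ := hy
    rw [Finset.centerMass_eq_of_sum_1 _ _ h1] at hcm
    obtain ⟨β, q, b1, b2, b3, b4, -⟩ := aux_pipeline X f tf wι z h0 h1 hz y hcm
    exact ⟨∑ l, β l * f (q l), β, q, b1, b2, b3, b4, rfl⟩
  -- everything in G y is below everything in S y (for y in hull irrelevant; memberships carry data)
  have hle : ∀ y, ∀ u ∈ G y, ∀ v ∈ S y, u ≤ v := by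
    rintro y u ⟨g, hgconv, hgle, rfl⟩ v ⟨α, p, hα, hαs, hpX, hyc, rfl⟩
    have hmem : ∀ l ∈ (Finset.univ : Finset (Fin (n + 1))), p l ∈ convexHull ℝ X :=
      fun l _ => subset_convexHull ℝ X (hpX l)
    calc g y = g (∑ l, α l • p l) := by rw [hyc]
      _ ≤ ∑ l, α l • g (p l) :=
        hgconv.map_sum_le (fun l _ => hα l) hαs hmem
      _ ≤ ∑ l, α l * f (p l) := by
        refine Finset.sum_le_sum fun l _ => ?_
        rw [smul_eq_mul]
        exact mul_le_mul_of_nonneg_left (hgle _ (hpX l)) (hα l)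
  have hGne : ∀ y, (G y).Nonempty := fun y =>
    ⟨f x₀, fun _ => f x₀, convexOn_const _ (convex_convexHull ℝ X),
      fun y' hy' => hx₀min y' hy', rfl⟩
  intro x hx
  have hGbdd : BddAbove (G x) := by
    obtain ⟨v, hv⟩ := hSne x hx
    exact ⟨v, fun u hu => hle x u hu v hv⟩
  refine le_antisymm
    (csSup_le (hGne x) fun u hu => le_csInf (hSne x hx) fun v hv => hle x u hu v hv) ?_
  -- the inf function itself is a competitor
  set ψ : (Fin n → ℝ) → ℝ := fun y => sInf (S y) with hψdef
  have hψle : ∀ y ∈ X, ψ y ≤ f y := by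
    intro y hy
    refine csInf_le (hSbdd y) ?_
    refine ⟨fun l => if l = 0 then 1 else 0, fun _ => y, ?_, ?_, fun _ => hy, ?_, ?_⟩
    · intro l; dsimp only; split <;> norm_num
    · simp
    · rw [← Finset.sum_smul]
      simp
    · rw [← Finset.sum_mul]
      simp
  have hψconv : ConvexOn ℝ (convexHull ℝ X) ψ := by
    refine ⟨convex_convexHull ℝ X, ?_⟩
    intro a ha b hb la mu hla hmu hlamu
    simp only [smul_eq_mul]
    have key : ∀ u ∈ S a, ∀ v ∈ S b, ψ (la • a + mu • b) ≤ la * u + mu * v := by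
      rintro u ⟨α, p, h1, h2, h3, h4, rfl⟩ v ⟨β, q, g1, g2, g3, g4, rfl⟩
      have hcomb := aux_pipeline X f (Finset.univ : Finset (Fin (n + 1) ⊕ Fin (n + 1)))
        (Sum.elim (fun l => la * α l) (fun l => mu * β l)) (Sum.elim p q)
        (by rintro (l | l) - <;> dsimp <;> [exact mul_nonneg hla (h1 l);
          exact mul_nonneg hmu (g1 l)])
        (by rw [Fintype.sum_sum_type]
            simp only [Sum.elim_inl, Sum.elim_inr, ← Finset.mul_sum, h2, g2, mul_one]
            exact hlamu)
        (by rintro (l | l) - <;> dsimp <;> [exact h3 l; exact g3 l])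
        (la • a + mu • b)
        (by rw [Fintype.sum_sum_type]
            simp only [Sum.elim_inl, Sum.elim_inr, mul_smul, ← Finset.smul_sum, h4, g4])
      obtain ⟨β', q', c1, c2, c3, c4, c5⟩ := hcomb
      have hmem : (∑ l, β' l * f (q' l)) ∈ S (la • a + mu • b) :=
        ⟨β', q', c1, c2, c3, c4, rfl⟩
      refine (csInf_le (hSbdd _) hmem).trans (c5.trans ?_)
      rw [Fintype.sum_sum_type]
      simp only [Sum.elim_inl, Sum.elim_inr, mul_assoc, ← Finset.mul_sum]
      exact le_rfl
    refine le_of_forall_pos_le_add ?_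
    intro ε hε
    obtain ⟨u, huS, hu⟩ := Real.lt_sInf_add_pos (hSne a ha) hε
    obtain ⟨v, hvS, hv⟩ := Real.lt_sInf_add_pos (hSne b hb) hε
    have h1 := key u huS v hvS
    have h2 : la * u ≤ la * (sInf (S a) + ε) := mul_le_mul_of_nonneg_left hu.le hla
    have h3 : mu * v ≤ mu * (sInf (S b) + ε) := mul_le_mul_of_nonneg_left hv.le hmu
    have : ψ (la • a + mu • b) ≤ la * sInf (S a) + mu * sInf (S b) + (la + mu) * ε := by
      nlinarith
    rw [hlamu, one_mul] at this
    exact this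
  have hmem : ψ x ∈ G x := ⟨ψ, hψconv, hψle, rfl⟩
  exact le_csSup hGbdd hmem


/-- The convex envelope of `f : X → ℝ` : the largest convex function on `convexHull ℝ X`
bounded above by `f` on `X`, defined pointwise as a supremum. -/
noncomputable def convEnvelope {n : ℕ} (X : Set (Fin n → ℝ)) (f : (Fin n → ℝ) → ℝ)
    (x : Fin n → ℝ) : ℝ :=
  sSup {v : ℝ | ∃ g : (Fin n → ℝ) → ℝ,
    ConvexOn ℝ (convexHull ℝ X) g ∧ (∀ y ∈ X, g y ≤ f y) ∧ v = g x}

/-- Rockafellar's representation of the convex envelope: for `x ∈ convexHull ℝ X`, the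
envelope value at `x` is the infimum over convex combinations of at most `n+1` points of
`X` representing `x` of the corresponding combinations of values of `f`. -/
theorem stmt2 {n : ℕ} (X : Set (Fin n → ℝ)) (f : (Fin n → ℝ) → ℝ)
    (hX : X.Nonempty)
    (hmin : ∃ x₀ ∈ X, ∀ y ∈ X, f x₀ ≤ f y) :
    ∀ x ∈ convexHull ℝ X,
      convEnvelope X f x =
        sInf {v : ℝ | ∃ (α : Fin (n + 1) → ℝ) (p : Fin (n + 1) → (Fin n → ℝ)),
          (∀ l, 0 ≤ α l) ∧ (∑ l, α l = 1) ∧ (∀ l, p l ∈ X) ∧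
          (∑ l, α l • p l = x) ∧ v = ∑ l, α l * f (p l)} := by
  intro x hx
  rw [convEnvelope]
  exact stmt2' X f hX hmin x hx
end

section
/- Let S ⊆ ℝ^{k_1} × ⋯ × ℝ^{k_n} and fix i and a partial vector x_{-i}. Suppose that for every index j ≠ i, the projection P_j(S) of S onto block j consists entirely of extreme points of itself (E(P_j(S)) = P_j(S)), and suppose there exists x_i^* with (x_i^*, x_{-i}) ∈ S. Then [conv(S)]_{x_{-i}} ⊆ conv([S]_{x_{-i}}): every point of the convex hull of S agreeing with x_{-i} outside block i is a convex combination of points of S agreeing with x_{-i} outside block i. -/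
/-- The restriction of `X ⊆ ℝ^{k₁} × ⋯ × ℝ^{kₙ}` w.r.t. the components of `x` outside
block `i`. -/
def blockRestrict {n : ℕ} {k : Fin n → ℕ} (X : Set ((i : Fin n) → Fin (k i) → ℝ))
    (i : Fin n) (x : (i : Fin n) → Fin (k i) → ℝ) : Set ((i : Fin n) → Fin (k i) → ℝ) :=
  {y ∈ X | ∀ j, j ≠ i → y j = x j}

/-- The projection of `S` onto block `j`. -/
def blockProj {n : ℕ} {k : Fin n → ℕ} (j : Fin n)
    (S : Set ((i : Fin n) → Fin (k i) → ℝ)) : Set (Fin (k j) → ℝ) :=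
  {v | ∃ y ∈ S, y j = v}

lemma extreme_forces {E : Type*} [AddCommGroup E] [Module ℝ E] {M : Set E} {v : E}
    (hv : v ∉ convexHull ℝ (M \ {v})) {ι : Type*} {t : Finset ι} {w : ι → ℝ} {z : ι → E}
    (hw : ∀ a ∈ t, 0 < w a) (hsum : ∑ a ∈ t, w a = 1)
    (hz : ∀ a ∈ t, z a ∈ M) (heq : ∑ a ∈ t, w a • z a = v) :
    ∀ a ∈ t, z a = v := by
  classical
  by_contra h
  push_neg at h
  obtain ⟨a, ha, hav⟩ := h
  set t1 := t.filter (fun b => z b ≠ v) with ht1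
  have hW : 0 < ∑ b ∈ t1, w b := by
    apply Finset.sum_pos
    · intro b hb; exact hw b (Finset.mem_filter.mp hb).1
    · exact ⟨a, Finset.mem_filter.mpr ⟨ha, hav⟩⟩
  set W := ∑ b ∈ t1, w b with hWdef
  have hsplit : (∑ b ∈ t1, w b • z b) + (∑ b ∈ t.filter (fun b => ¬ z b ≠ v), w b • z b) = v := by
    rw [Finset.sum_filter_add_sum_filter_not t _ _]; exact heq
  have h2 : ∑ b ∈ t.filter (fun b => ¬ z b ≠ v), w b • z b = (1 - W) • v := by
    have : ∀ b ∈ t.filter (fun b => ¬ z b ≠ v), w b • z b = w b • v := by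
      intro b hb
      have := (Finset.mem_filter.mp hb).2
      push_neg at this
      rw [this]
    rw [Finset.sum_congr rfl this, ← Finset.sum_smul]
    congr 1
    have := Finset.sum_filter_add_sum_filter_not t (fun b => z b ≠ v) w
    rw [hsum] at this
    linarith [this]
  have h3 : ∑ b ∈ t1, w b • z b = W • v := by
    rw [h2] at hsplit
    have h := eq_sub_of_add_eq hsplit
    rw [h, sub_smul, one_smul]
    abel
  have hcm : t1.centerMass w z = v := by
    rw [Finset.centerMass, h3, ← hWdef, smul_smul, inv_mul_cancel₀ hW.ne', one_smul]
  apply hv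
  have hmem : t1.centerMass w z ∈ convexHull ℝ (M \ {v}) := by
    apply Finset.centerMass_mem_convexHull
    · intro b hb; exact (hw b (Finset.mem_filter.mp hb).1).le
    · exact hW
    · intro b hb
      exact ⟨hz b (Finset.mem_filter.mp hb).1, (Finset.mem_filter.mp hb).2⟩
  rwa [hcm] at hmem

/-- If for every block `j ≠ i` the projection of `S` onto block `j` consists entirely of
its own extreme points, and some point of `S` agrees with `x` outside block `i`, then
every point of `convexHull ℝ S` agreeing with `x` outside block `i` is a convex
combination of points of `S` agreeing with `x` outside block `i`. -/
theorem stmt8 {n : ℕ} {k : Fin n → ℕ} (S : Set ((i : Fin n) → Fin (k i) → ℝ))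
    (i : Fin n) (x : (i : Fin n) → Fin (k i) → ℝ)
    (hext : ∀ j, j ≠ i → ∀ v ∈ blockProj j S, v ∉ convexHull ℝ (blockProj j S \ {v}))
    (hex : ∃ z ∈ S, ∀ j, j ≠ i → z j = x j) :
    blockRestrict (convexHull ℝ S) i x ⊆ convexHull ℝ (blockRestrict S i x) := by
  classical
  rintro y ⟨hy, hyx⟩
  rw [convexHull_eq] at hy
  obtain ⟨ι, t, w, z, hw0, hsum, hzS, hcm⟩ := hy
  set t' := t.filter (fun a => w a ≠ 0) with ht'
  have hw' : ∀ a ∈ t', 0 < w a := by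
    intro a ha
    rcases Finset.mem_filter.mp ha with ⟨hat, hne⟩
    exact lt_of_le_of_ne (hw0 a hat) (Ne.symm hne)
  have hsum' : ∑ a ∈ t', w a = 1 := by
    rw [ht', Finset.sum_filter_ne_zero]; exact hsum
  have hcm' : t'.centerMass w z = y := by
    rw [ht', Finset.centerMass_filter_ne_zero]; exact hcm
  have heq : ∑ a ∈ t', w a • z a = y := by
    rw [← Finset.centerMass_eq_of_sum_1 _ _ hsum']; exact hcm'
  have hzR : ∀ a ∈ t', z a ∈ blockRestrict S i x := by
    intro a ha
    refine ⟨hzS a (Finset.mem_filter.mp ha).1, ?_⟩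
    intro j hj
    obtain ⟨z₀, hz₀S, hz₀⟩ := hex
    have hxP : x j ∈ blockProj j S := ⟨z₀, hz₀S, hz₀ j hj⟩
    have heqj : ∑ a ∈ t', w a • (z a j) = x j := by
      have : (∑ a ∈ t', w a • z a) j = y j := by rw [heq]
      simpa [Finset.sum_apply, hyx j hj] using this
    exact extreme_forces (hext j hj (x j) hxP) hw' hsum'
      (fun b hb => ⟨z b, hzS b (Finset.mem_filter.mp hb).1, rfl⟩) heqj a ha
  rw [← hcm']
  exact Finset.centerMass_mem_convexHull _ (fun b hb => (hw' b hb).le)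
    (by rw [hsum']; norm_num) hzR
end

section
/- Let A ∈ ℝ^{m×m'} be a totally unimodular matrix (e.g., the arc-incidence matrix of a directed graph), b ∈ ℤ^m, and let a, c ∈ ℤ^{m'} be integral bounds. Then the polyhedron { x ∈ ℝ^{m'} | A x = b, a ≤ x ≤ c } is an integral polyhedron: it equals the convex hull of its integral points, i.e., { x ∈ ℝ^{m'}_{} | Ax = b, a ≤ x ≤ c } = conv({ x ∈ ℤ^{m'} | Ax = b, a ≤ x ≤ c }). -/
open Matrix

/-- A real matrix is totally unimodular if every square submatrix has determinant
in `{-1, 0, 1}`. -/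
def TotallyUnimodular {m m' : ℕ} (A : Matrix (Fin m) (Fin m') ℝ) : Prop :=
  ∀ (s : ℕ) (f : Fin s → Fin m) (g : Fin s → Fin m'),
    Function.Injective f → Function.Injective g →
    (A.submatrix f g).det ∈ ({-1, 0, 1} : Set ℝ)

lemma tu_entry_int {m m' : ℕ} {A : Matrix (Fin m) (Fin m') ℝ} (hA : TotallyUnimodular A)
    (i : Fin m) (j : Fin m') : ∃ z : ℤ, A i j = (z : ℝ) := by
  have h := hA 1 (fun _ => i) (fun _ => j)
    (Function.injective_of_subsingleton _) (Function.injective_of_subsingleton _)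
  rw [Matrix.det_fin_one] at h
  simp only [Set.mem_insert_iff, Set.mem_singleton_iff] at h
  rcases h with h | h | h
  · exact ⟨-1, by simpa using h⟩
  · exact ⟨0, by simpa using h⟩
  · exact ⟨1, by simpa using h⟩

lemma cast_mulVec {k : ℕ} (M : Matrix (Fin k) (Fin k) ℤ) (w : Fin k → ℤ) :
    (M.map (Int.cast : ℤ → ℝ)).mulVec (fun j => (w j : ℝ)) = fun i => ((M.mulVec w i : ℤ) : ℝ) := by
  funext i; simp [Matrix.mulVec, dotProduct]

lemma extreme_int {m m' : ℕ} {A : Matrix (Fin m) (Fin m') ℝ} (hA : TotallyUnimodular A)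
    (b : Fin m → ℤ) (a c : Fin m' → ℤ) (x : Fin m' → ℝ)
    (hb : A.mulVec x = (fun i => (b i : ℝ)))
    (hax : ∀ j, (a j : ℝ) ≤ x j) (hxc : ∀ j, x j ≤ (c j : ℝ))
    (hker : ∀ y : Fin m' → ℝ, A.mulVec y = 0 →
      (∀ j, (a j : ℝ) ≤ x j + y j) → (∀ j, x j + y j ≤ (c j : ℝ)) →
      (∀ j, (a j : ℝ) ≤ x j - y j) → (∀ j, x j - y j ≤ (c j : ℝ)) → y = 0) :
    ∀ j, ∃ z : ℤ, x j = (z : ℝ) := by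
  classical
  set F : Finset (Fin m') := Finset.univ.filter (fun j => (a j : ℝ) < x j ∧ x j < (c j : ℝ)) with hF
  -- off-F coordinates are integral
  have hoff : ∀ j ∉ F, ∃ z : ℤ, x j = (z : ℝ) := by
    intro j hj
    rw [hF, Finset.mem_filter] at hj
    push_neg at hj
    by_cases h1 : (a j : ℝ) < x j
    · exact ⟨c j, le_antisymm (hxc j) (hj (Finset.mem_univ j) h1)⟩
    · exact ⟨a j, le_antisymm (le_of_not_gt h1) (hax j)⟩
  -- support version of hker
  have hker' : ∀ y : Fin m' → ℝ, A.mulVec y = 0 → (∀ j ∉ F, y j = 0) → y = 0 := by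
    intro y hAy hsupp
    by_contra hy
    obtain ⟨j0, hj0⟩ : ∃ j, y j ≠ 0 := by
      by_contra h; push_neg at h; exact hy (funext h)
    have hne : (Finset.univ : Finset (Fin m')).Nonempty := ⟨j0, Finset.mem_univ _⟩
    set w : Fin m' → ℝ := fun j =>
      if y j = 0 then 1 else min (x j - a j) ((c j : ℝ) - x j) / |y j| with hw
    set ε : ℝ := Finset.univ.inf' hne w with hε
    have hFpos : ∀ j, y j ≠ 0 → 0 < min (x j - a j) ((c j : ℝ) - x j) := by
      intro j hyj
      have hjF : j ∈ F := by
        by_contra hjF; exact hyj (hsupp j hjF)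
      rw [hF, Finset.mem_filter] at hjF
      exact lt_min (by linarith [hjF.2.1]) (by linarith [hjF.2.2])
    have hεpos : 0 < ε := by
      rw [hε, Finset.lt_inf'_iff]
      intro j _
      rw [hw]
      by_cases hyj : y j = 0
      · simp [hyj]
      · simp only [hyj, if_false]
        exact div_pos (hFpos j hyj) (abs_pos.mpr hyj)
    have hbound : ∀ j, |ε * y j| ≤ min (x j - a j) ((c j : ℝ) - x j) ∨ y j = 0 := by
      intro j
      by_cases hyj : y j = 0
      · exact Or.inr hyj
      · left
        have h1 : ε ≤ w j := Finset.inf'_le _ (Finset.mem_univ j)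
        rw [hw] at h1; simp only [hyj, if_false] at h1
        rw [abs_mul, abs_of_pos hεpos]
        calc ε * |y j| ≤ (min (x j - a j) ((c j : ℝ) - x j) / |y j|) * |y j| :=
              mul_le_mul_of_nonneg_right h1 (abs_nonneg _)
          _ = min (x j - a j) ((c j : ℝ) - x j) := by
              field_simp
    have key : ∀ j, (a j : ℝ) ≤ x j + ε * y j ∧ x j + ε * y j ≤ c j ∧
        (a j : ℝ) ≤ x j - ε * y j ∧ x j - ε * y j ≤ c j := by
      intro j
      rcases hbound j with h | h
      · have h1 := abs_le.mp (h.trans (min_le_left _ _))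
        have h2 := abs_le.mp (h.trans (min_le_right _ _))
        constructor; · linarith [h1.1]
        constructor; · linarith [h2.2]
        constructor; · linarith [h1.2]
        · linarith [h2.1]
      · simp [h, hax j, hxc j]
    have hzero : (fun j => ε * y j) = 0 := by
      apply hker
      · have : A.mulVec (ε • y) = ε • A.mulVec y := (A.mulVec_smul ε y)
        show A.mulVec (ε • y) = 0
        simpa [hAy, smul_eq_mul] using this
      · exact fun j => (key j).1
      · exact fun j => (key j).2.1
      · exact fun j => (key j).2.2.1
      · exact fun j => (key j).2.2.2
    exact hj0 (by
      have := congrFun hzero j0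
      simp only [Pi.zero_apply] at this
      rcases mul_eq_zero.mp this with h | h
      · exact absurd h (ne_of_gt hεpos)
      · exact h)
  -- set up the column selection
  set k : ℕ := F.card with hk
  have hφ := F.orderIsoOfFin (rfl : F.card = k)
  set g : Fin k → Fin m' := fun l => ((F.orderIsoOfFin rfl l : {x // x ∈ F}) : Fin m') with hg
  have hgmem : ∀ l, g l ∈ F := fun l => (F.orderIsoOfFin rfl l).2
  have hginj : Function.Injective g := by
    intro l l' h
    have := Subtype.ext h (p := fun j => j ∈ F)
    exact (F.orderIsoOfFin rfl).toEquiv.injective this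
  have sumF : ∀ (w : Fin m' → ℝ), ∑ j ∈ F, w j = ∑ l : Fin k, w (g l) := by
    intro w
    rw [← Finset.sum_coe_sort F w]
    exact (Equiv.sum_comp (F.orderIsoOfFin rfl).toEquiv (fun u : {x // x ∈ F} => w u)).symm
  set B : Matrix (Fin m) (Fin k) ℝ := A.submatrix id g with hB
  -- injectivity of B.mulVec
  have hBker : ∀ v : Fin k → ℝ, B.mulVec v = 0 → v = 0 := by
    intro v hv
    set y : Fin m' → ℝ := fun j =>
      if h : j ∈ F then v ((F.orderIsoOfFin rfl).symm ⟨j, h⟩) else 0 with hy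
    have hyg : ∀ l, y (g l) = v l := by
      intro l
      have h := hgmem l
      have h2 : (⟨g l, h⟩ : {x // x ∈ F}) = (F.orderIsoOfFin rfl) l := Subtype.ext rfl
      simp only [hy, dif_pos h, h2, OrderIso.symm_apply_apply]
    have hAy : A.mulVec y = B.mulVec v := by
      funext i
      show ∑ j, A i j * y j = ∑ l, B i l * v l
      have h0 : ∑ j, A i j * y j = ∑ j ∈ F, A i j * y j := by
        symm
        apply Finset.sum_subset (Finset.subset_univ F)
        intro j _ hj
        simp only [hy, dif_neg hj, mul_zero]
      rw [h0, sumF (fun j => A i j * y j)]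
      exact Finset.sum_congr rfl (fun l _ => by rw [hyg l, hB]; rfl)
    have hy0 : y = 0 := by
      apply hker' y (by rw [hAy, hv])
      intro j hj
      simp only [hy, dif_neg hj]
    funext l
    have := congrFun hy0 (g l)
    rw [hyg l] at this
    exact this
  have hBinj : Function.Injective B.mulVecLin := by
    rw [← LinearMap.ker_eq_bot]
    apply (Submodule.eq_bot_iff _).mpr
    intro v hv
    exact hBker v (by simpa using hv)
  -- extract k linearly independent rows
  have hrank : B.rank = k := by
    rw [Matrix.rank, LinearMap.finrank_range_of_inj hBinj, Module.finrank_fin_fun]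
  have hspan : Submodule.span ℝ (Set.range B) = ⊤ := by
    apply Submodule.eq_top_of_finrank_eq
    rw [Module.finrank_fin_fun]
    have h3 := B.rank_eq_finrank_span_row
    rw [hrank] at h3
    exact (by simpa [Set.finrank] using h3.symm : Module.finrank ℝ (Submodule.span ℝ (Set.range B.row)) = k)
  obtain ⟨t, hts, hspant, hli⟩ := exists_linearIndependent ℝ (Set.range B)
  have htfin : t.Finite := hli.setFinite
  haveI := htfin.fintype
  have hbasis : Module.Basis t ℝ (Fin k → ℝ) :=
    Module.Basis.mk hli (by rw [Subtype.range_coe, hspant, hspan])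
  have hcard : Fintype.card t = k := by
    rw [← Module.finrank_eq_card_basis hbasis, Module.finrank_fin_fun]
  set e : Fin k ≃ t := (Fintype.equivFinOfCardEq hcard).symm with he
  have hchoice : ∀ u : t, ∃ i, B i = (u : Fin k → ℝ) := fun u => hts u.2
  choose r hr using hchoice
  set f : Fin k → Fin m := fun l => r (e l) with hf
  have hBf : ∀ l, B (f l) = ((e l : t) : Fin k → ℝ) := fun l => hr (e l)
  have hfinj : Function.Injective f := by
    intro l l' h
    apply e.injective
    apply Subtype.coe_injective
    have h1 : ((e l : t) : Fin k → ℝ) = ((e l' : t) : Fin k → ℝ) := by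
      rw [← hBf l, ← hBf l']
      exact congrArg B h
    exact h1
  have hrows : LinearIndependent ℝ (fun l => B (f l)) := by
    have : (fun l => B (f l)) = (fun u : t => (u : Fin k → ℝ)) ∘ e := funext hBf
    rw [this]
    exact hli.comp e e.injective
  set C : Matrix (Fin k) (Fin k) ℝ := A.submatrix f g with hC
  have hCB : C = B.submatrix f id := rfl
  have hCunit : IsUnit C := by
    rw [hCB]
    exact Matrix.linearIndependent_rows_iff_isUnit.mp hrows
  have hCdet : C.det = 1 ∨ C.det = -1 := by
    have h1 := hA k f g hfinj hginj
    have h2 : C.det ≠ 0 := (Matrix.isUnit_iff_isUnit_det C).mp hCunit |>.ne_zero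
    simp only [Set.mem_insert_iff, Set.mem_singleton_iff] at h1
    rcases h1 with h | h | h
    · exact Or.inr h
    · exact absurd h h2
    · exact Or.inl h
  -- integer structures
  choose Az hAz using (fun i j => tu_entry_int hA i j)
  have hxoff : ∀ j, ∃ z : ℤ, j ∉ F → x j = (z : ℝ) := by
    intro j
    by_cases h : j ∈ F
    · exact ⟨0, fun h' => absurd h h'⟩
    · obtain ⟨z, hz⟩ := hoff j h
      exact ⟨z, fun _ => hz⟩
  choose xz hxz using hxoff
  set Cz : Matrix (Fin k) (Fin k) ℤ := Matrix.of (fun i j => Az (f i) (g j)) with hCz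
  have hCmap : C = Cz.map (Int.cast : ℤ → ℝ) := by
    ext i j
    simp [hC, hCz, Matrix.map_apply, hAz]
  -- the linear system C * v = dz
  set v : Fin k → ℝ := fun l => x (g l) with hv
  set dz : Fin k → ℤ := fun i => b (f i) - ∑ j ∈ Fᶜ, Az (f i) j * xz j with hdz
  have hCv : C.mulVec v = fun i => (dz i : ℝ) := by
    funext i
    show ∑ l, C i l * v l = ((dz i : ℤ) : ℝ)
    have hbi : ∑ j, A (f i) j * x j = (b (f i) : ℝ) := congrFun hb (f i)
    have hsplit := Finset.sum_add_sum_compl F (fun j => A (f i) j * x j)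
    have hF1 : ∑ j ∈ F, A (f i) j * x j = ∑ l, C i l * v l := by
      rw [sumF (fun j => A (f i) j * x j)]
      rfl
    have hF2 : ∑ j ∈ Fᶜ, A (f i) j * x j = ((∑ j ∈ Fᶜ, Az (f i) j * xz j : ℤ) : ℝ) := by
      push_cast
      apply Finset.sum_congr rfl
      intro j hj
      rw [hAz (f i) j, hxz j (Finset.mem_compl.mp hj)]
    rw [hF1, hF2, hbi] at hsplit
    rw [hdz]
    push_cast at hsplit ⊢
    linarith
  have hadj : (C.adjugate).mulVec (C.mulVec v) = C.det • v := by
    rw [Matrix.mulVec_mulVec, Matrix.adjugate_mul, Matrix.smul_mulVec, Matrix.one_mulVec]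
  have hmap2 : C.adjugate = (Cz.adjugate).map (Int.cast : ℤ → ℝ) := by
    rw [hCmap]
    have h5 := (Int.castRingHom ℝ).map_adjugate Cz
    simp only [RingHom.mapMatrix_apply, Int.coe_castRingHom] at h5
    exact h5.symm
  have hint : ∀ l, ∃ z : ℤ, C.det * v l = (z : ℝ) := by
    intro l
    have h1 := congrFun hadj l
    rw [hCv, hmap2, cast_mulVec] at h1
    refine ⟨(Cz.adjugate).mulVec dz l, ?_⟩
    rw [Pi.smul_apply, smul_eq_mul] at h1
    exact h1.symm
  have hvint : ∀ l, ∃ z : ℤ, v l = (z : ℝ) := by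
    intro l
    obtain ⟨z, hz⟩ := hint l
    rcases hCdet with h | h
    · exact ⟨z, by rw [h, one_mul] at hz; exact hz⟩
    · refine ⟨-z, ?_⟩
      rw [h] at hz
      push_cast
      linarith
  intro j
  by_cases hj : j ∈ F
  · obtain ⟨z, hz⟩ := hvint ((F.orderIsoOfFin rfl).symm ⟨j, hj⟩)
    refine ⟨z, ?_⟩
    have hgj : g ((F.orderIsoOfFin rfl).symm ⟨j, hj⟩) = j := by
      rw [hg]
      simp
    rw [← hgj]
    exact hz
  · exact hoff j hj

/-- For a totally unimodular matrix `A`, integral `b` and integral box bounds `a ≤ x ≤ c`,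
the polyhedron `{x | Ax = b, a ≤ x ≤ c}` is integral: it equals the convex hull of its
integral points. -/
theorem stmt14 {m m' : ℕ} (A : Matrix (Fin m) (Fin m') ℝ) (hA : TotallyUnimodular A)
    (b : Fin m → ℤ) (a c : Fin m' → ℤ) :
    {x : Fin m' → ℝ | A.mulVec x = (fun i => (b i : ℝ)) ∧
        (∀ j, (a j : ℝ) ≤ x j) ∧ (∀ j, x j ≤ (c j : ℝ))} =
      convexHull ℝ {x : Fin m' → ℝ | (∀ j, ∃ z : ℤ, x j = (z : ℝ)) ∧
        A.mulVec x = (fun i => (b i : ℝ)) ∧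
        (∀ j, (a j : ℝ) ≤ x j) ∧ (∀ j, x j ≤ (c j : ℝ))} := by
  classical
  set P : Set (Fin m' → ℝ) := {x | A.mulVec x = (fun i => (b i : ℝ)) ∧
      (∀ j, (a j : ℝ) ≤ x j) ∧ (∀ j, x j ≤ (c j : ℝ))} with hP
  set S : Set (Fin m' → ℝ) := {x | (∀ j, ∃ z : ℤ, x j = (z : ℝ)) ∧
      A.mulVec x = (fun i => (b i : ℝ)) ∧
      (∀ j, (a j : ℝ) ≤ x j) ∧ (∀ j, x j ≤ (c j : ℝ))} with hS
  have hPconv : Convex ℝ P := by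
    rintro x ⟨hx1, hx2, hx3⟩ y ⟨hy1, hy2, hy3⟩ α β hα hβ hαβ
    refine ⟨?_, fun j => ?_, fun j => ?_⟩
    · have h1 : A.mulVec (α • x + β • y) = α • A.mulVec x + β • A.mulVec y := by
        rw [Matrix.mulVec_add, Matrix.mulVec_smul, Matrix.mulVec_smul]
      rw [h1, hx1, hy1]
      funext i
      simp only [Pi.add_apply, Pi.smul_apply, smul_eq_mul]
      linear_combination ((b i : ℝ)) * hαβ
    · simp only [Pi.add_apply, Pi.smul_apply, smul_eq_mul]
      have haj : (a j : ℝ) = α * (a j : ℝ) + β * (a j : ℝ) := by linear_combination (-(a j : ℝ)) * hαβ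
      nlinarith [mul_le_mul_of_nonneg_left (hx2 j) hα, mul_le_mul_of_nonneg_left (hy2 j) hβ]
    · simp only [Pi.add_apply, Pi.smul_apply, smul_eq_mul]
      have hcj : (c j : ℝ) = α * (c j : ℝ) + β * (c j : ℝ) := by linear_combination (-(c j : ℝ)) * hαβ
      nlinarith [mul_le_mul_of_nonneg_left (hx3 j) hα, mul_le_mul_of_nonneg_left (hy3 j) hβ]
  have hSP : S ⊆ P := fun x hx => ⟨hx.2.1, hx.2.2⟩
  refine Set.Subset.antisymm ?_ (convexHull_min hSP hPconv)
  -- compactness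
  have hmulVecCont : Continuous (fun x : Fin m' → ℝ => A.mulVec x) := by
    have h := A.mulVecLin.continuous_of_finiteDimensional
    have h2 : ⇑A.mulVecLin = fun x : Fin m' → ℝ => A.mulVec x := by
      funext x; exact A.mulVecLin_apply x
    rwa [h2] at h
  have hPeq : P = {x : Fin m' → ℝ | A.mulVec x = (fun i => (b i : ℝ))} ∩
      Set.Icc (fun j => (a j : ℝ)) (fun j => (c j : ℝ)) := by
    ext x
    simp only [hP, Set.mem_setOf_eq, Set.mem_inter_iff, Set.mem_Icc, Pi.le_def]
  have hPclosed : IsClosed P := by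
    rw [hPeq]
    exact IsClosed.inter (isClosed_eq hmulVecCont continuous_const) isClosed_Icc
  have hPcomp : IsCompact P := by
    apply IsCompact.of_isClosed_subset (isCompact_Icc
      (a := fun j => (a j : ℝ)) (b := fun j => (c j : ℝ))) hPclosed
    rw [hPeq]; exact Set.inter_subset_right
  -- S is finite
  have hSfin : S.Finite := by
    apply Set.Finite.subset ((Set.finite_Icc a c).image (fun z : Fin m' → ℤ => fun j => (z j : ℝ)))
    rintro x ⟨hint, hAx, hax, hxc⟩
    choose z hz using hint
    refine ⟨z, ?_, ?_⟩
    · rw [Set.mem_Icc]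
      constructor
      · intro j
        have := hax j; rw [hz j] at this; exact_mod_cast this
      · intro j
        have := hxc j; rw [hz j] at this; exact_mod_cast this
    · funext j; exact (hz j).symm
  -- extreme points are in S
  have hES : P.extremePoints ℝ ⊆ S := by
    intro x hx
    rw [mem_extremePoints] at hx
    obtain ⟨⟨hb', hax, hxc⟩, hext⟩ := hx
    refine ⟨?_, hb', hax, hxc⟩
    apply extreme_int hA b a c x hb' hax hxc
    intro y hAy h1 h2 h3 h4
    have hx1 : (x + y) ∈ P := by
      refine ⟨?_, fun j => h1 j, fun j => h2 j⟩
      rw [Matrix.mulVec_add, hAy, hb']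
      funext i; simp
    have hx2 : (x - y) ∈ P := by
      refine ⟨?_, fun j => h3 j, fun j => h4 j⟩
      rw [Matrix.mulVec_sub, hAy, hb']
      funext i; simp
    have hseg : x ∈ openSegment ℝ (x + y) (x - y) := by
      refine ⟨1/2, 1/2, by norm_num, by norm_num, by norm_num, ?_⟩
      funext j
      simp only [Pi.add_apply, Pi.sub_apply, Pi.smul_apply, smul_eq_mul]
      ring
    have hcon := (hext (x + y) hx1 (x - y) hx2 hseg).1
    funext j
    have := congrFun hcon j
    simp only [Pi.add_apply, Pi.zero_apply] at this ⊢
    linarith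
  calc P = closure (convexHull ℝ (P.extremePoints ℝ)) :=
        (closure_convexHull_extremePoints hPcomp hPconv).symm
    _ ⊆ closure (convexHull ℝ S) := closure_mono (convexHull_mono hES)
    _ = convexHull ℝ S := (hSfin.isClosed_convexHull (𝕜 := ℝ)).closure_eq
end

section
/- Let I be a GNEP and I^conv a convexified instance: for each i and each x_{-i} ∈ rdom X_i, the convexified strategy set is conv(X_i(x_{-i})) and the convexified cost φ_i(·, x_{-i}) is the convex envelope of π_i(·, x_{-i}) on X_i(x_{-i}). Assume each player's original optimization problem attains its minimum on nonempty strategy sets. Then for every feasible x ∈ X(x): V̂^conv(x) ≤ V̂(x), where V̂ and V̂^conv are the respective Nikaido–Isoda gap functions. -/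
/-- For a feasible profile `x` of a GNEP and a convexified instance (for each player,
the cost `φᵢ(·, x₋ᵢ)` is the convex envelope of `πᵢ(·, x₋ᵢ)` on `Xᵢ(x₋ᵢ)` and the
strategy set is `conv(Xᵢ(x₋ᵢ))`), the convexified Nikaido–Isoda gap is at most the
original one: `V̂ᶜᵒⁿᵛ(x) ≤ V̂(x)`. -/
theorem stmt16 {n : ℕ} {k : Fin n → ℕ}
    (Xmap : (i : Fin n) → ((i : Fin n) → Fin (k i) → ℝ) → Set (Fin (k i) → ℝ))
    (π φ : Fin n → ((i : Fin n) → Fin (k i) → ℝ) → ℝ)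
    (x : (i : Fin n) → Fin (k i) → ℝ)
    (hfeas : ∀ i, x i ∈ Xmap i x)
    (hmin : ∀ i, ∃ v ∈ Xmap i x, ∀ w ∈ Xmap i x,
      π i (Function.update x i v) ≤ π i (Function.update x i w))
    (hconv : ∀ i, ConvexOn ℝ (convexHull ℝ (Xmap i x))
      (fun w => φ i (Function.update x i w)))
    (hle : ∀ i, ∀ w ∈ Xmap i x,
      φ i (Function.update x i w) ≤ π i (Function.update x i w))
    (hmax : ∀ i (g : (Fin (k i) → ℝ) → ℝ), ConvexOn ℝ (convexHull ℝ (Xmap i x)) g →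
      (∀ w ∈ Xmap i x, g w ≤ π i (Function.update x i w)) →
      ∀ w ∈ convexHull ℝ (Xmap i x), g w ≤ φ i (Function.update x i w)) :
    ∑ i, (φ i x -
        sInf ((fun w => φ i (Function.update x i w)) '' convexHull ℝ (Xmap i x)))
      ≤ ∑ i, (π i x -
        sInf ((fun w => π i (Function.update x i w)) '' Xmap i x)) := by
  apply Finset.sum_le_sum
  intro i _
  have hxupd : Function.update x i (x i) = x := Function.update_eq_self i x
  obtain ⟨v, hv, hvmin⟩ := hmin i
  set m := π i (Function.update x i v) with hm
  -- constant function m satisfies hmax hypotheses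
  have hlbφ : ∀ w ∈ convexHull ℝ (Xmap i x), m ≤ φ i (Function.update x i w) := by
    intro w hw
    exact hmax i (fun _ => m) (convexOn_const _ (convex_convexHull ℝ _))
      (fun w hw => hvmin w hw) w hw
  have hne : ((fun w => φ i (Function.update x i w)) '' convexHull ℝ (Xmap i x)).Nonempty :=
    ⟨_, Set.mem_image_of_mem _ (subset_convexHull ℝ _ (hfeas i))⟩
  have h1 : m ≤ sInf ((fun w => φ i (Function.update x i w)) '' convexHull ℝ (Xmap i x)) := by
    apply le_csInf hne
    rintro b ⟨w, hw, rfl⟩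
    exact hlbφ w hw
  have h2 : sInf ((fun w => π i (Function.update x i w)) '' Xmap i x) ≤ m := by
    apply csInf_le
    · exact ⟨m, by rintro b ⟨w, hw, rfl⟩; exact hvmin w hw⟩
    · exact Set.mem_image_of_mem _ hv
  have h3 : φ i x ≤ π i x := by
    have := hle i (x i) (hfeas i)
    rwa [hxupd] at this
  linarith
end

section
/- Main convexification theorem: Let I be a GNEP and I^conv any convexified instance (convex-hull strategy sets and convex-envelope costs on the refined domains). For any x with x ∈ X(x), the following are equivalent: (1) x is a generalized Nash equilibrium of I; (2) x is a generalized Nash equilibrium of I^conv and φ_i(x) = π_i(x) for all players i. -/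
/-- Main convexification theorem: for a feasible profile `x` of a GNEP whose costs and
strategy sets are convexified as in the paper (convex-hull strategy sets, convex-envelope
costs `φᵢ`), `x` is a generalized Nash equilibrium of the original instance iff it is a
generalized Nash equilibrium of the convexified instance and `φᵢ(x) = πᵢ(x)` for all
players `i`. -/
theorem stmt17 {n : ℕ} {k : Fin n → ℕ}
    (Xmap : (i : Fin n) → ((i : Fin n) → Fin (k i) → ℝ) → Set (Fin (k i) → ℝ))
    (π φ : Fin n → ((i : Fin n) → Fin (k i) → ℝ) → ℝ)
    (x : (i : Fin n) → Fin (k i) → ℝ)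
    (hfeas : ∀ i, x i ∈ Xmap i x)
    (hmin : ∀ i, ∃ v ∈ Xmap i x, ∀ w ∈ Xmap i x,
      π i (Function.update x i v) ≤ π i (Function.update x i w))
    (hconv : ∀ i, ConvexOn ℝ (convexHull ℝ (Xmap i x))
      (fun w => φ i (Function.update x i w)))
    (hle : ∀ i, ∀ w ∈ Xmap i x,
      φ i (Function.update x i w) ≤ π i (Function.update x i w))
    (hmax : ∀ i (g : (Fin (k i) → ℝ) → ℝ), ConvexOn ℝ (convexHull ℝ (Xmap i x)) g →
      (∀ w ∈ Xmap i x, g w ≤ π i (Function.update x i w)) →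
      ∀ w ∈ convexHull ℝ (Xmap i x), g w ≤ φ i (Function.update x i w)) :
    (∀ i, ∀ y ∈ Xmap i x, π i x ≤ π i (Function.update x i y)) ↔
      ((∀ i, ∀ y ∈ convexHull ℝ (Xmap i x), φ i x ≤ φ i (Function.update x i y)) ∧
        ∀ i, φ i x = π i x) := by
  have hupd : ∀ i, Function.update x i (x i) = x := fun i => Function.update_eq_self i x
  constructor
  · intro hGNE
    have key : ∀ i, ∀ w ∈ convexHull ℝ (Xmap i x), π i x ≤ φ i (Function.update x i w) := by
      intro i
      exact hmax i (fun _ => π i x) (convexOn_const _ (convex_convexHull ℝ _))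
        (fun w hw => hGNE i w hw)
    have heq : ∀ i, φ i x = π i x := by
      intro i
      have h1 : π i x ≤ φ i x := by
        have := key i (x i) (subset_convexHull ℝ _ (hfeas i))
        rwa [hupd i] at this
      have h2 : φ i x ≤ π i x := by
        have := hle i (x i) (hfeas i)
        rwa [hupd i] at this
      linarith
    refine ⟨fun i y hy => ?_, heq⟩
    calc φ i x = π i x := heq i
    _ ≤ φ i (Function.update x i y) := key i y hy
  · rintro ⟨hGNE, heq⟩ i y hy
    calc π i x = φ i x := (heq i).symm
    _ ≤ φ i (Function.update x i y) := hGNE i y (subset_convexHull ℝ _ hy)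
    _ ≤ π i (Function.update x i y) := hle i y hy
end

section
/- Restrictive-closed characterization via extreme points: an instance I is restrictive-closed (i.e., conv([S_i]_{x_{-i}}) = [conv(S)]_{x_{-i}} for all i and all x_{-i} ∈ rdom X_i) if and only if for all i and all x_{-i} ∈ rdom X_i, all extreme points of [conv(S)]_{x_{-i}} belong to S_i: E([conv(S)]_{x_{-i}}) ⊆ S_i. (Assume each restriction [conv(S)]_{x_{-i}} is compact, so that it equals the convex hull of its extreme points.) -/
open Module Set

lemma mink_face_step {E : Type} [NormedAddCommGroup E] [NormedSpace ℝ E] [FiniteDimensional ℝ E]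
    {s : Set E} (hcpt : IsCompact s) (hconv : Convex ℝ s)
    {w₀ : E} (hw₀ : w₀ ∈ interior s)
    (IH : ∀ F : Set E, IsCompact F → Convex ℝ F →
      Module.finrank ℝ (vectorSpan ℝ F) < Module.finrank ℝ E →
      F ⊆ convexHull ℝ (F.extremePoints ℝ))
    {p : E} (hp : p ∈ s) (hpi : p ∉ interior s) :
    p ∈ convexHull ℝ (s.extremePoints ℝ) := by
  obtain ⟨l, hl⟩ := geometric_hahn_banach_open_point hconv.interior isOpen_interior hpi
  have hle : ∀ z ∈ s, l z ≤ l p := by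
    intro z hz
    have hseg : ∀ t : ℝ, t ∈ Set.Ioo (0:ℝ) 1 → (1 - t) • z + t • w₀ ∈ interior s := by
      intro t ht
      exact hconv.combo_closure_interior_mem_interior (subset_closure hz) hw₀
        (by linarith [ht.2]) ht.1 (by ring)
    have hcont : Continuous fun t : ℝ => l ((1 - t) • z + t • w₀) := by fun_prop
    have htends : Filter.Tendsto (fun t : ℝ => l ((1 - t) • z + t • w₀))
        (nhdsWithin 0 (Set.Ioi 0)) (nhds (l z)) := by
      have h0 : l ((1 - (0:ℝ)) • z + (0:ℝ) • w₀) = l z := by simp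
      simpa [h0] using (hcont.tendsto 0).mono_left nhdsWithin_le_nhds
    refine le_of_tendsto htends ?_
    filter_upwards [Ioo_mem_nhdsGT_of_mem (Set.mem_Ico.mpr ⟨le_refl (0:ℝ), one_pos⟩)] with t ht
    exact (hl _ (hseg t ht)).le
  have hexp : IsExposed ℝ s {z ∈ s | ∀ w ∈ s, l w ≤ l z} := fun _ => ⟨l, rfl⟩
  have hpF : p ∈ {z ∈ s | ∀ w ∈ s, l w ≤ l z} := ⟨hp, hle⟩
  have hFc : IsCompact {z ∈ s | ∀ w ∈ s, l w ≤ l z} := hexp.isCompact hcpt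
  have hFv : Convex ℝ {z ∈ s | ∀ w ∈ s, l w ≤ l z} := hexp.convex hconv
  have hker : vectorSpan ℝ {z ∈ s | ∀ w ∈ s, l w ≤ l z} ≤ LinearMap.ker (l : E →ₗ[ℝ] ℝ) := by
    rw [vectorSpan_def, Submodule.span_le]
    rintro u ⟨z, hz, w, hw, rfl⟩
    have h1 : l z ≤ l w := hw.2 z hz.1
    have h2 : l w ≤ l z := hz.2 w hw.1
    simp only [SetLike.mem_coe, LinearMap.mem_ker, vsub_eq_sub, ContinuousLinearMap.coe_coe,
      map_sub]
    linarith
  have hne : LinearMap.ker (l : E →ₗ[ℝ] ℝ) ≠ ⊤ := by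
    intro h
    have h2 : p - w₀ ∈ LinearMap.ker (l : E →ₗ[ℝ] ℝ) := h ▸ Submodule.mem_top
    have h3 := hl w₀ hw₀
    simp only [LinearMap.mem_ker, ContinuousLinearMap.coe_coe, map_sub, sub_eq_zero] at h2
    linarith
  have hrank : Module.finrank ℝ (vectorSpan ℝ {z ∈ s | ∀ w ∈ s, l w ≤ l z}) <
      Module.finrank ℝ E :=
    lt_of_le_of_lt (Submodule.finrank_mono hker)
      (Submodule.finrank_lt hne)
  exact convexHull_mono hexp.isExtreme.extremePoints_subset_extremePoints
    (IH _ hFc hFv hrank hpF)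

lemma mink_interior_case {E : Type} [NormedAddCommGroup E] [NormedSpace ℝ E] [FiniteDimensional ℝ E]
    {s : Set E} (hcpt : IsCompact s) (hconv : Convex ℝ s) (hint : (interior s).Nonempty)
    (IH : ∀ F : Set E, IsCompact F → Convex ℝ F →
      Module.finrank ℝ (vectorSpan ℝ F) < Module.finrank ℝ E →
      F ⊆ convexHull ℝ (F.extremePoints ℝ)) :
    s ⊆ convexHull ℝ (s.extremePoints ℝ) := by
  obtain ⟨w₀, hw₀⟩ := hint
  intro x hx
  by_cases hsing : ∀ y ∈ s, y = x
  · exact subset_convexHull ℝ _ (mem_extremePoints.mpr ⟨hx, fun y hy z hz _ => ⟨hsing y hy, hsing z hz⟩⟩)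
  push_neg at hsing
  obtain ⟨y₀, hy₀, hyne⟩ := hsing
  set v : E := y₀ - x with hv
  have hvne : v ≠ 0 := sub_ne_zero.mpr hyne
  have hvpos : (0:ℝ) < ‖v‖ := norm_pos_iff.mpr hvne
  set I : Set ℝ := {t : ℝ | x + t • v ∈ s} with hI
  have hIc : IsClosed I := hcpt.isClosed.preimage (by fun_prop)
  have hIb : Bornology.IsBounded I := by
    obtain ⟨C, hC⟩ := isBounded_iff_forall_norm_le.mp hcpt.isBounded
    rw [isBounded_iff_forall_norm_le]
    refine ⟨(C + ‖x‖) / ‖v‖, fun t ht => ?_⟩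
    have h1 : ‖t • v‖ ≤ C + ‖x‖ := by
      have h2 := hC _ ht
      calc ‖t • v‖ = ‖x + t • v + -x‖ := by rw [show x + t • v + -x = t • v from by abel]
        _ ≤ ‖x + t • v‖ + ‖x‖ := by simpa using norm_add_le (x + t • v) (-x)
        _ ≤ C + ‖x‖ := by linarith
    rw [norm_smul, Real.norm_eq_abs] at h1
    rw [Real.norm_eq_abs, le_div_iff₀ hvpos]
    exact h1
  have hIcpt : IsCompact I := Metric.isCompact_iff_isClosed_bounded.mpr ⟨hIc, hIb⟩
  have h0I : (0:ℝ) ∈ I := by simp [hI, hx]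
  have h1I : (1:ℝ) ∈ I := by simp [hI, hv, hy₀]
  have hIne : I.Nonempty := ⟨0, h0I⟩
  set a := sInf I with ha
  set b := sSup I with hb
  have haI : a ∈ I := hIcpt.sInf_mem hIne
  have hbI : b ∈ I := hIcpt.sSup_mem hIne
  have ha0 : a ≤ 0 := csInf_le hIb.bddBelow h0I
  have hb1 : 1 ≤ b := le_csSup hIb.bddAbove h1I
  have hab : a < b := lt_of_le_of_lt ha0 (lt_of_lt_of_le one_pos hb1)
  have hdist : ∀ t u : ℝ, dist (x + t • v) (x + u • v) = |t - u| * ‖v‖ := by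
    intro t u
    rw [dist_eq_norm]
    have : (x + t • v) - (x + u • v) = (t - u) • v := by
      rw [sub_smul]; abel
    rw [this, norm_smul, Real.norm_eq_abs]
  have hpni : x + a • v ∉ interior s := by
    intro hpint
    obtain ⟨ε, hε, hball⟩ := Metric.isOpen_iff.mp isOpen_interior _ hpint
    set t := a - ε / (2 * ‖v‖) with ht
    have htI : t ∈ I := by
      have hmem : x + t • v ∈ Metric.ball (x + a • v) ε := by
        rw [Metric.mem_ball, hdist]
        have h4 : |t - a| = ε / (2 * ‖v‖) := by
          rw [ht, show a - ε / (2 * ‖v‖) - a = -(ε / (2 * ‖v‖)) from by ring, abs_neg,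
            abs_of_nonneg (by positivity)]
        rw [h4, div_mul_eq_mul_div, mul_comm, div_lt_iff₀ (by positivity)]
        nlinarith
      have : x + t • v ∈ s := interior_subset (hball hmem)
      exact this
    have h5 : a ≤ t := csInf_le hIb.bddBelow htI
    have hpos : 0 < ε / (2 * ‖v‖) := by positivity
    have h6 : t < a := by rw [ht]; linarith
    linarith
  have hqni : x + b • v ∉ interior s := by
    intro hpint
    obtain ⟨ε, hε, hball⟩ := Metric.isOpen_iff.mp isOpen_interior _ hpint
    set t := b + ε / (2 * ‖v‖) with ht
    have htI : t ∈ I := by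
      have hmem : x + t • v ∈ Metric.ball (x + b • v) ε := by
        rw [Metric.mem_ball, hdist]
        have h4 : |t - b| = ε / (2 * ‖v‖) := by
          rw [ht, show b + ε / (2 * ‖v‖) - b = ε / (2 * ‖v‖) from by ring,
            abs_of_nonneg (by positivity)]
        rw [h4, div_mul_eq_mul_div, mul_comm, div_lt_iff₀ (by positivity)]
        nlinarith
      have : x + t • v ∈ s := interior_subset (hball hmem)
      exact this
    have h5 : t ≤ b := le_csSup hIb.bddAbove htI
    have hpos : 0 < ε / (2 * ‖v‖) := by positivity
    have h6 : b < t := by rw [ht]; linarith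
    linarith
  have hpmem := mink_face_step hcpt hconv hw₀ IH haI hpni
  have hqmem := mink_face_step hcpt hconv hw₀ IH hbI hqni
  have hxseg : x ∈ segment ℝ (x + a • v) (x + b • v) := by
    have hba : b - a ≠ 0 := by linarith
    have hcomb : (b / (b - a)) * a + (-a / (b - a)) * b = 0 := by field_simp; ring
    have hsum : b / (b - a) + -a / (b - a) = 1 := by
      rw [← add_div, show b + -a = b - a from by ring]
      exact div_self hba
    refine ⟨b / (b - a), -a / (b - a), div_nonneg (by linarith) (by linarith),
      div_nonneg (by linarith) (by linarith), hsum, ?_⟩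
    calc (b / (b - a)) • (x + a • v) + (-a / (b - a)) • (x + b • v)
          = (b / (b - a) + -a / (b - a)) • x
            + ((b / (b - a)) * a + (-a / (b - a)) * b) • v := by
            simp only [smul_add, add_smul, smul_smul]; abel
        _ = x := by rw [hcomb, hsum, one_smul, zero_smul, add_zero]
  exact (convex_convexHull ℝ _).segment_subset hpmem hqmem hxseg

lemma mink_aux : ∀ (d : ℕ) (E : Type) [NormedAddCommGroup E] [NormedSpace ℝ E]
    [FiniteDimensional ℝ E] (s : Set E), IsCompact s → Convex ℝ s →
    Module.finrank ℝ (vectorSpan ℝ s) ≤ d → s ⊆ convexHull ℝ (s.extremePoints ℝ) := by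
  intro d
  induction d using Nat.strong_induction_on with
  | _ d IH =>
  intro E _ _ _ s hcpt hconv hd x hx
  by_cases hsing : ∀ y ∈ s, y = x
  · exact subset_convexHull ℝ _ (mem_extremePoints.mpr ⟨hx, fun y hy z hz _ => ⟨hsing y hy, hsing z hz⟩⟩)
  clear hsing
  set W : Submodule ℝ E := vectorSpan ℝ s with hW
  let φ : W →ᵃ[ℝ] E := ((AffineEquiv.constVAdd ℝ E x).toAffineMap).comp W.subtype.toAffineMap
  have hφ : ∀ w : W, φ w = x + (w : E) := fun w => by
    simp [φ, AffineEquiv.constVAdd_apply, vadd_eq_add]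
  have hφinj : Function.Injective φ := by
    intro w₁ w₂ h
    rw [hφ, hφ] at h
    exact Subtype.ext (add_left_cancel h)
  set s' : Set W := φ ⁻¹' s with hs'
  have himg : φ '' s' = s := by
    apply Set.Subset.antisymm (Set.image_preimage_subset φ s)
    intro y hy
    have hmem : y - x ∈ W := by
      have := vsub_mem_vectorSpan ℝ hy hx
      rwa [vsub_eq_sub] at this
    refine ⟨⟨y - x, hmem⟩, ?_, by rw [hφ]; simp⟩
    show φ _ ∈ s
    rw [hφ]; simpa using hy
  have hs'cpt : IsCompact s' := by
    have h1 : IsCompact ((fun e => x + e) ⁻¹' s) :=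
      (Homeomorph.addLeft x).isCompact_preimage.mpr hcpt
    have h2 : s' = W.subtype ⁻¹' ((fun e => x + e) ⁻¹' s) := by
      ext w; simp [hs', hφ]
    rw [h2]
    exact (LinearMap.isClosedEmbedding_of_injective W.ker_subtype).isCompact_preimage h1
  have hs'conv : Convex ℝ s' := hconv.affine_preimage φ
  have h0s' : (0 : W) ∈ s' := by show φ 0 ∈ s; rw [hφ]; simpa using hx
  have hvs : vectorSpan ℝ s' = ⊤ := by
    apply Submodule.map_injective_of_injective W.injective_subtype
    rw [Submodule.map_top, Submodule.range_subtype]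
    apply le_antisymm
    · exact Submodule.map_subtype_le W _
    · conv_lhs => rw [hW, vectorSpan_def]
      rw [Submodule.span_le]
      rintro u ⟨z, hz, w, hw, rfl⟩
      obtain ⟨z', hz', rfl⟩ : z ∈ φ '' s' := himg.symm ▸ hz
      obtain ⟨w', hw', rfl⟩ : w ∈ φ '' s' := himg.symm ▸ hw
      have hmem : z' - w' ∈ vectorSpan ℝ s' := by
        simpa [vsub_eq_sub] using vsub_mem_vectorSpan ℝ hz' hw'
      refine ⟨z' - w', hmem, ?_⟩
      show W.subtype (z' - w') = φ z' -ᵥ φ w'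
      rw [vsub_eq_sub, hφ, hφ, Submodule.subtype_apply]
      push_cast
      abel
  have haff : affineSpan ℝ s' = ⊤ :=
    (AffineSubspace.affineSpan_eq_top_iff_vectorSpan_eq_top_of_nonempty ℝ W W ⟨0, h0s'⟩).mpr hvs
  have hint : (interior s').Nonempty :=
    hs'conv.interior_nonempty_iff_affineSpan_eq_top.mpr haff
  have hWd : Module.finrank ℝ W ≤ d := hd
  have IH' : ∀ F : Set W, IsCompact F → Convex ℝ F →
      Module.finrank ℝ (vectorSpan ℝ F) < Module.finrank ℝ W →
      F ⊆ convexHull ℝ (F.extremePoints ℝ) := by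
    intro F hFc hFv hFr
    exact IH (Module.finrank ℝ (vectorSpan ℝ F)) (lt_of_lt_of_le hFr hWd) W F hFc hFv le_rfl
  have hsub : s' ⊆ convexHull ℝ (s'.extremePoints ℝ) :=
    mink_interior_case hs'cpt hs'conv hint IH'
  have hextimg : φ '' (s'.extremePoints ℝ) ⊆ s.extremePoints ℝ := by
    rintro _ ⟨w, hw, rfl⟩
    obtain ⟨hws', hwext⟩ := hw
    refine ⟨himg ▸ mem_image_of_mem φ hws', ?_⟩
    rintro y hy z hz hseg
    obtain ⟨y', hy', rfl⟩ : y ∈ φ '' s' := himg.symm ▸ hy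
    obtain ⟨z', hz', rfl⟩ : z ∈ φ '' s' := himg.symm ▸ hz
    obtain ⟨c₁, c₂, hc₁, hc₂, hcs, hcomb⟩ := hseg
    have hc2 : c₂ = 1 - c₁ := by linarith
    subst hc2
    have hkey : w = c₁ • y' + (1 - c₁) • z' := by
      apply hφinj
      rw [hφ (c₁ • y' + (1 - c₁) • z'), ← hcomb, hφ, hφ]
      push_cast
      match_scalars <;> ring
    have := hwext hy' hz' ⟨c₁, 1 - c₁, hc₁, hc₂, hcs, hkey.symm⟩
    exact congrArg φ this
  have hx' : x ∈ φ '' (convexHull ℝ (s'.extremePoints ℝ)) :=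
    ⟨0, hsub h0s', by rw [hφ]; simp⟩
  rw [AffineMap.image_convexHull] at hx'
  exact convexHull_mono hextimg hx'

lemma minkowski_thm {E : Type} [NormedAddCommGroup E] [NormedSpace ℝ E] [FiniteDimensional ℝ E]
    {s : Set E} (hcpt : IsCompact s) (hconv : Convex ℝ s) :
    s ⊆ convexHull ℝ (s.extremePoints ℝ) :=
  mink_aux (Module.finrank ℝ (vectorSpan ℝ s)) E s hcpt hconv le_rfl



/-- A profile is feasible if every player's component lies in her strategy set. -/
def Feas {n : ℕ} {k : Fin n → ℕ}
    (Xmap : (i : Fin n) → ((i : Fin n) → Fin (k i) → ℝ) → Set (Fin (k i) → ℝ))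
    (x : (i : Fin n) → Fin (k i) → ℝ) : Prop :=
  ∀ i, x i ∈ Xmap i x

/-- `x₋ᵢ` lies in the refined domain of player `i`. -/
def rdom {n : ℕ} {k : Fin n → ℕ}
    (Xmap : (i : Fin n) → ((i : Fin n) → Fin (k i) → ℝ) → Set (Fin (k i) → ℝ))
    (i : Fin n) (x : (i : Fin n) → Fin (k i) → ℝ) : Prop :=
  ∃ v : Fin (k i) → ℝ, Feas Xmap (Function.update x i v)

/-- Player `i`'s complete relevant strategy set `Sᵢ`. -/
def completeStrat {n : ℕ} {k : Fin n → ℕ}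
    (Xmap : (i : Fin n) → ((i : Fin n) → Fin (k i) → ℝ) → Set (Fin (k i) → ℝ))
    (i : Fin n) : Set ((i : Fin n) → Fin (k i) → ℝ) :=
  {y | rdom Xmap i y ∧ y i ∈ Xmap i y}

/-- Extreme points of a set `M`: points of `M` not lying in `conv(M \ {x})`. -/
def extremePts {n : ℕ} {k : Fin n → ℕ} (M : Set ((i : Fin n) → Fin (k i) → ℝ)) :
    Set ((i : Fin n) → Fin (k i) → ℝ) :=
  {x ∈ M | x ∉ convexHull ℝ (M \ {x})}

/-- Characterization of restrictive-closedness via extreme points: assuming each relevant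
restriction of `conv(S)` is compact, an instance is restrictive-closed
(`conv([Sᵢ]_{x₋ᵢ}) = [conv(S)]_{x₋ᵢ}` for all `i` and relevant `x₋ᵢ`) iff all extreme
points of each relevant restriction of `conv(S)` belong to `Sᵢ`. -/
theorem stmt18 {n : ℕ} {k : Fin n → ℕ}
    (Xmap : (i : Fin n) → ((i : Fin n) → Fin (k i) → ℝ) → Set (Fin (k i) → ℝ))
    (hdep : ∀ i x y, (∀ j, j ≠ i → x j = y j) → Xmap i x = Xmap i y)
    (hcpt : ∀ (i : Fin n) (x : (i : Fin n) → Fin (k i) → ℝ), rdom Xmap i x →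
      IsCompact (blockRestrict (convexHull ℝ (⋃ j, completeStrat Xmap j)) i x)) :
    (∀ (i : Fin n) (x : (i : Fin n) → Fin (k i) → ℝ), rdom Xmap i x →
      convexHull ℝ (blockRestrict (completeStrat Xmap i) i x) =
        blockRestrict (convexHull ℝ (⋃ j, completeStrat Xmap j)) i x) ↔
    (∀ (i : Fin n) (x : (i : Fin n) → Fin (k i) → ℝ), rdom Xmap i x →
      extremePts (blockRestrict (convexHull ℝ (⋃ j, completeStrat Xmap j)) i x) ⊆
        completeStrat Xmap i) := by
  classical
  set S := ⋃ j, completeStrat Xmap j with hS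
  have hconvM : ∀ (i : Fin n) (x : (i : Fin n) → Fin (k i) → ℝ),
      Convex ℝ (blockRestrict (convexHull ℝ S) i x) := by
    intro i x y hy z hz a b ha hb hab
    refine ⟨(convex_convexHull ℝ S) hy.1 hz.1 ha hb hab, ?_⟩
    intro j hj
    have h1 : (a • y + b • z) j = a • y j + b • z j := rfl
    rw [h1, hy.2 j hj, hz.2 j hj, ← add_smul, hab, one_smul]
  have hbridge : ∀ (i : Fin n) (x : (i : Fin n) → Fin (k i) → ℝ),
      extremePts (blockRestrict (convexHull ℝ S) i x) =
      (blockRestrict (convexHull ℝ S) i x).extremePoints ℝ := by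
    intro i x
    ext e
    rw [(hconvM i x).mem_extremePoints_iff_mem_diff_convexHull_diff, Set.mem_diff]
    exact Iff.rfl
  constructor
  · intro hrc i x hr e he
    rw [hbridge i x, ← hrc i x hr] at he
    exact (extremePoints_convexHull_subset he).1
  · intro hext i x hr
    apply Set.Subset.antisymm
    · apply convexHull_min
      · rintro y ⟨hyS, hyagree⟩
        exact ⟨subset_convexHull ℝ S (Set.mem_iUnion.mpr ⟨i, hyS⟩), hyagree⟩
      · exact hconvM i x
    · intro m hm
      have hsub : (blockRestrict (convexHull ℝ S) i x).extremePoints ℝ ⊆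
          blockRestrict (completeStrat Xmap i) i x := by
        intro e he
        have he' : e ∈ extremePts (blockRestrict (convexHull ℝ S) i x) :=
          (hbridge i x).symm ▸ he
        exact ⟨hext i x hr he', (extremePoints_subset he).2⟩
      exact convexHull_mono hsub (minkowski_thm (hcpt i x hr) (hconvM i x) hm)
end

section
/- Pseudo jointly constrained implies restrictive-closed under extreme-point projections: Let I be a GNEP such that for all i and x_{-i} ∈ rdom X_i, X_i(x_{-i}) = { x_i | (x_i, x_{-i}) ∈ S } (pseudo jointly constrained), where S = ⋃_i S_i. If for every player i the projection P_i(S) of S onto block i satisfies E(P_i(S)) = P_i(S), then I is restrictive-closed: conv([S_i]_{x_{-i}}) = [conv(S)]_{x_{-i}} for all i and x_{-i} ∈ rdom X_i. -/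

lemma extreme_comb {E : Type*} [AddCommGroup E] [Module ℝ E] {M : Set E} {v : E}
    (hv : v ∉ convexHull ℝ (M \ {v})) {ι : Type*} {t : Finset ι} {w : ι → ℝ} {z : ι → E}
    (hw0 : ∀ s ∈ t, 0 ≤ w s) (hw1 : ∑ s ∈ t, w s = 1) (hz : ∀ s ∈ t, z s ∈ M)
    (hc : ∑ s ∈ t, w s • z s = v) : ∀ s ∈ t, 0 < w s → z s = v := by
  classical
  by_contra h
  push_neg at h
  obtain ⟨s0, hs0, hws0, hzs0⟩ := h
  set A := t.filter (fun s => z s ≠ v) with hA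
  have hs0A : s0 ∈ A := Finset.mem_filter.2 ⟨hs0, hzs0⟩
  have hbpos : 0 < ∑ s ∈ A, w s :=
    Finset.sum_pos' (fun s hs => hw0 s (Finset.mem_filter.1 hs).1) ⟨s0, hs0A, hws0⟩
  have hB : ∑ s ∈ t.filter (fun s => ¬ z s ≠ v), w s • z s
      = (∑ s ∈ t.filter (fun s => ¬ z s ≠ v), w s) • v := by
    rw [Finset.sum_smul]
    refine Finset.sum_congr rfl fun s hs => ?_
    rw [not_not.1 (Finset.mem_filter.1 hs).2]
  have hwsplit : (∑ s ∈ A, w s) + ∑ s ∈ t.filter (fun s => ¬ z s ≠ v), w s = 1 := by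
    rw [Finset.sum_filter_add_sum_filter_not]; exact hw1
  have hAv : ∑ s ∈ A, w s • z s = (∑ s ∈ A, w s) • v := by
    have hsplit : (∑ s ∈ A, w s • z s) + ∑ s ∈ t.filter (fun s => ¬ z s ≠ v), w s • z s
        = ∑ s ∈ t, w s • z s := Finset.sum_filter_add_sum_filter_not t _ _
    have hb : ∑ s ∈ t.filter (fun s => ¬ z s ≠ v), w s = 1 - ∑ s ∈ A, w s := by linarith
    rw [hB, hb, hc] at hsplit
    rw [eq_sub_of_add_eq hsplit, sub_smul, one_smul, sub_sub_cancel]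
  have hcm : A.centerMass w z = v := by
    rw [Finset.centerMass, hAv, smul_smul, inv_mul_cancel₀ hbpos.ne', one_smul]
  have hmem : A.centerMass w z ∈ convexHull ℝ (M \ {v}) := Finset.centerMass_mem_convexHull _
    (fun s hs => hw0 s (Finset.mem_filter.1 hs).1) hbpos fun s hs =>
    ⟨hz s (Finset.mem_filter.1 hs).1, (Finset.mem_filter.1 hs).2⟩
  rw [hcm] at hmem
  exact hv hmem

lemma feas_mem_completeStrat {n : ℕ} {k : Fin n → ℕ}
    {Xmap : (i : Fin n) → ((i : Fin n) → Fin (k i) → ℝ) → Set (Fin (k i) → ℝ)}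
    {y : (i : Fin n) → Fin (k i) → ℝ} (hy : Feas Xmap y) (j : Fin n) :
    y ∈ completeStrat Xmap j :=
  ⟨⟨y j, by rwa [Function.update_eq_self]⟩, hy j⟩


/-- A pseudo jointly constrained GNEP whose projections `Pᵢ(S)` onto each block consist
entirely of extreme points is restrictive-closed:
`conv([Sᵢ]_{x₋ᵢ}) = [conv(S)]_{x₋ᵢ}` for all `i` and all relevant `x₋ᵢ`. -/
theorem stmt19 {n : ℕ} {k : Fin n → ℕ}
    (Xmap : (i : Fin n) → ((i : Fin n) → Fin (k i) → ℝ) → Set (Fin (k i) → ℝ))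
    (hdep : ∀ i x y, (∀ j, j ≠ i → x j = y j) → Xmap i x = Xmap i y)
    (hpjc : ∀ (i : Fin n) (x : (i : Fin n) → Fin (k i) → ℝ), rdom Xmap i x →
      Xmap i x = {v | Function.update x i v ∈ ⋃ j, completeStrat Xmap j})
    (hext : ∀ i : Fin n, ∀ v ∈ blockProj i (⋃ j, completeStrat Xmap j),
      v ∉ convexHull ℝ (blockProj i (⋃ j, completeStrat Xmap j) \ {v})) :
    ∀ (i : Fin n) (x : (i : Fin n) → Fin (k i) → ℝ), rdom Xmap i x →
      convexHull ℝ (blockRestrict (completeStrat Xmap i) i x) =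
        blockRestrict (convexHull ℝ (⋃ j, completeStrat Xmap j)) i x := by
  classical
  intro i x hx
  set S : Set ((i : Fin n) → Fin (k i) → ℝ) := ⋃ j, completeStrat Xmap j with hSdef
  apply Set.Subset.antisymm
  · -- easy direction
    have hconv : Convex ℝ (blockRestrict (convexHull ℝ S) i x) := by
      intro y1 hy1 y2 hy2 a b ha hb hab
      refine ⟨(convex_convexHull ℝ S) hy1.1 hy2.1 ha hb hab, fun j hj => ?_⟩
      have e1 := hy1.2 j hj
      have e2 := hy2.2 j hj
      funext m
      simp only [Pi.add_apply, Pi.smul_apply, e1, e2]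
      rw [← add_smul, hab, one_smul]
    refine convexHull_min ?_ hconv
    rintro y ⟨hy, hagree⟩
    exact ⟨subset_convexHull ℝ S (Set.mem_iUnion.2 ⟨i, hy⟩), hagree⟩
  · rintro y ⟨hy, hagree⟩
    rw [convexHull_eq] at hy
    obtain ⟨ι, t, w, z, hw0, hw1, hzS, hcm⟩ := hy
    rw [Finset.centerMass_eq_of_sum_1 _ _ hw1] at hcm
    obtain ⟨v, hv⟩ := hx
    have hu : Function.update x i v ∈ S :=
      Set.mem_iUnion.2 ⟨i, feas_mem_completeStrat hv i⟩
    -- every positive-weight point agrees with x outside block i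
    have hkey : ∀ s ∈ t, 0 < w s → ∀ j, j ≠ i → z s j = x j := by
      intro s hs hws j hj
      have hxP : x j ∈ blockProj j S :=
        ⟨Function.update x i v, hu, Function.update_of_ne hj _ _⟩
      have hproj : ∑ s ∈ t, w s • (z s j) = x j := by
        rw [← hagree j hj, ← hcm]
        funext m
        simp [Finset.sum_apply]
      exact extreme_comb (hext j (x j) hxP)
        hw0 hw1 (fun s hs => ⟨z s, hzS s hs, rfl⟩) hproj s hs hws
    -- every positive-weight point lies in [Sᵢ]_{x₋ᵢ}
    have hmem : ∀ s ∈ t, 0 < w s → z s ∈ blockRestrict (completeStrat Xmap i) i x := by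
      intro s hs hws
      have hag : ∀ j, j ≠ i → z s j = x j := hkey s hs hws
      have hupd : ∀ u, Function.update (z s) i u = Function.update x i u := by
        intro u
        funext j
        by_cases hj : j = i
        · subst hj; simp
        · rw [Function.update_of_ne hj, Function.update_of_ne hj, hag j hj]
      have hrd : rdom Xmap i (z s) := ⟨v, by rw [hupd]; exact hv⟩
      refine ⟨⟨hrd, ?_⟩, hag⟩
      rw [hpjc i (z s) hrd]
      show Function.update (z s) i (z s i) ∈ S
      rw [Function.update_eq_self]
      exact hzS s hs
    -- assemble
    have hy' : y = (t.filter fun s => w s ≠ 0).centerMass w z := by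
      rw [Finset.centerMass_filter_ne_zero, Finset.centerMass_eq_of_sum_1 _ _ hw1, hcm]
    rw [hy']
    refine Finset.centerMass_mem_convexHull _
      (fun s hs => hw0 s (Finset.mem_filter.1 hs).1) ?_ fun s hs => ?_
    · rw [Finset.sum_filter_ne_zero, hw1]; exact one_pos
    · obtain ⟨hst, hwne⟩ := Finset.mem_filter.1 hs
      exact hmem s hst (lt_of_le_of_ne (hw0 s hst) (Ne.symm hwne))
end
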